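/- arXiv:2410.09357 — 2 statements merged into one kernel-verified Lean document; each statement's English description precedes it below -/
import Mathlib

section
/- Let s ≥ 1 and let P ∈ ℤ[X₁,…,X_s] be a polynomial of total degree d ≥ 2. Then the upper density of squarefree values of P is at most the Euler product: for every real ε > 0 there exists M such that for all tuples 𝐏 = (P₁,…,P_s) of positive integers with min(P₁,…,P_s) ≥ M one has N_P(𝐏) ≤ (𝔖_P + ε) · 2ˢ · P₁⋯P_s. -/
/-- `ρ_P(q)`: the number of tuples `a ∈ (ℤ/qℤ)ˢ` with `P(a) ≡ 0 (mod q)`. -/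
noncomputable def rhoP (s : ℕ) (P : MvPolynomial (Fin s) ℤ) (q : ℕ) : ℕ :=
  Nat.card {a : Fin s → ZMod q //
    MvPolynomial.eval a (MvPolynomial.map (Int.castRingHom (ZMod q)) P) = 0}

/-- The partial Euler product `∏_{p ≤ N, p prime} (1 − ρ_P(p²)/p^{2s})`. -/
noncomputable def eulerPartialProd (s : ℕ) (P : MvPolynomial (Fin s) ℤ) (N : ℕ) : ℝ :=
  ∏ p ∈ (Finset.range (N + 1)).filter Nat.Prime,
    (1 - (rhoP s P (p ^ 2) : ℝ) / (p : ℝ) ^ (2 * s))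

/-- `N_P(𝐏)`: the number of tuples `a ∈ ℤˢ` with `|a j| ≤ P j` for all `j` such that
`P(a)` is a squarefree integer. -/
noncomputable def NP (s : ℕ) (P : MvPolynomial (Fin s) ℤ) (Pb : Fin s → ℕ) : ℕ :=
  Nat.card {a : Fin s → ℤ //
    (∀ j, |a j| ≤ (Pb j : ℤ)) ∧ Squarefree (MvPolynomial.eval a P)}

/-!
A squarefree value of `P` is nonzero modulo `p²` for every prime `p`. Fix `N` and put
`Q = (N#)² = ∏_{p ≤ N} p²`. Cut the box `|aⱼ| ≤ Pⱼ` into `∏ⱼ (⌊2Pⱼ/Q⌋ + 1)` blocks of side `Q`;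
since the `p²` are pairwise coprime, a point of a block is determined by its residues modulo the
`p²`, and for squarefree values these residues range over `∏_{p ≤ N} (p^{2s} - ρ_P(p²)) = Q^s E_N`
tuples, `E_N` the partial Euler product. Hence `N_P(𝐏) ≤ E_N ∏ⱼ (2Pⱼ + Q)`; choosing `N` with
`E_N < 𝔖_P + ε` and then all `Pⱼ` large makes the right side at most `(𝔖_P + ε) 2^s ∏ⱼ Pⱼ`.
-/

open MvPolynomial

theorem Int.eq_of_modEq_of_ediv_eq {a b n : ℤ} (hmod : a ≡ b [ZMOD n]) (hdiv : a / n = b / n) :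
    a = b :=
  calc a = n * (a / n) + a % n := (Int.mul_ediv_add_emod a n).symm
    _ = n * (b / n) + b % n := by rw [hdiv, hmod.eq]
    _ = b := Int.mul_ediv_add_emod b n

theorem card_box_le_card_mul_prod_of_modEq {s : ℕ} (B : Fin s → ℕ) (Q : ℕ)
    {p : (Fin s → ℤ) → Prop} {T : Type*} [Finite T]
    (f : {a : Fin s → ℤ // (∀ j, |a j| ≤ B j) ∧ p a} → T)
    (hf : ∀ a b, f a = f b → ∀ j, a.1 j ≡ b.1 j [ZMOD Q]) :
    Nat.card {a : Fin s → ℤ // (∀ j, |a j| ≤ B j) ∧ p a} ≤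
      Nat.card T * ∏ j, (2 * B j / Q + 1) := by
  let block (a : {a : Fin s → ℤ // (∀ j, |a j| ≤ B j) ∧ p a}) (j : Fin s) :
      Fin (2 * B j / Q + 1) :=
    ⟨(a.1 j + B j).toNat / Q, Nat.lt_succ_of_le <| Nat.div_le_div_right <| by
      have := abs_le.mp (a.2.1 j); omega⟩
  have hblock : ∀ a j, ((block a j : ℕ) : ℤ) = (a.1 j + B j) / Q := fun a j => by
    have := abs_le.mp (a.2.1 j)
    simp only [block, Int.natCast_ediv, Int.toNat_of_nonneg (by omega : 0 ≤ a.1 j + B j)]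
  have hinj : Function.Injective fun a => (f a, block a) := by
    intro a b hab
    simp only [Prod.mk.injEq] at hab
    ext j
    have hdiv : (a.1 j + B j) / Q = (b.1 j + B j) / Q := by
      rw [← hblock, ← hblock, hab.2]
    exact add_right_cancel <| Int.eq_of_modEq_of_ediv_eq ((hf a b hab.1 j).add_right _) hdiv
  calc _ ≤ Nat.card (T × ∀ j, Fin (2 * B j / Q + 1)) := Nat.card_le_card_of_injective _ hinj
    _ = _ := by simp [Nat.card_prod]

section Residues

variable {s : ℕ} (P : MvPolynomial (Fin s) ℤ)

theorem card_nonroots_eq (q : ℕ) [NeZero q] :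
    Nat.card {z : Fin s → ZMod q // eval z (map (Int.castRingHom (ZMod q)) P) ≠ 0} =
      q ^ s - rhoP s P q := by
  classical
  rw [rhoP, Nat.card_eq_fintype_card, Nat.card_eq_fintype_card, Fintype.card_subtype_compl,
    Fintype.card_fun, ZMod.card, Fintype.card_fin]

theorem rhoP_le (q : ℕ) [NeZero q] : rhoP s P q ≤ q ^ s := by
  classical
  rw [rhoP, Nat.card_eq_fintype_card]
  exact (Fintype.card_subtype_le _).trans_eq <| by
    rw [Fintype.card_fun, ZMod.card, Fintype.card_fin]

theorem eval_intCast_ne_zero_of_squarefree {a : Fin s → ℤ} (ha : Squarefree (eval a P))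
    {p : ℕ} (hp : p ≠ 1) :
    eval (fun j => (a j : ZMod (p ^ 2))) (map (Int.castRingHom (ZMod (p ^ 2))) P) ≠ 0 := by
  intro h0
  have hcast : ((eval a P : ℤ) : ZMod (p ^ 2)) = 0 :=
    (map_eval (Int.castRingHom (ZMod (p ^ 2))) a P).trans h0
  have hdvd := (ZMod.intCast_zmod_eq_zero_iff_dvd _ _).mp hcast
  rw [Nat.cast_pow, sq] at hdvd
  exact hp <| Nat.isUnit_iff.mp <| Int.ofNat_isUnit.mp <| ha _ hdvd

theorem Int.modEq_prod_sq_of_forall {ps : Finset ℕ} (hps : ∀ p ∈ ps, p.Prime) {x y : ℤ}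
    (h : ∀ p ∈ ps, x ≡ y [ZMOD (p ^ 2 : ℕ)]) : x ≡ y [ZMOD (∏ p ∈ ps, p ^ 2 : ℕ)] := by
  rw [Int.modEq_iff_dvd, Nat.cast_prod]
  refine Finset.prod_dvd_of_coprime (fun p hp q hq hpq => ?_)
    fun p hp => Int.modEq_iff_dvd.mp (h p hp)
  exact (Nat.Coprime.pow 2 2 <| (Nat.coprime_primes (hps p hp) (hps q hq)).mpr hpq).isCoprime

end Residues

theorem NP_le_prod_mul_prod {s : ℕ} (P : MvPolynomial (Fin s) ℤ) {ps : Finset ℕ}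
    (hps : ∀ p ∈ ps, p.Prime) (Pb : Fin s → ℕ) :
    NP s P Pb ≤ (∏ p ∈ ps, ((p ^ 2) ^ s - rhoP s P (p ^ 2))) *
      ∏ j, (2 * Pb j / ∏ p ∈ ps, p ^ 2 + 1) := by
  have hne : ∀ p : ps, NeZero ((p : ℕ) ^ 2) := fun p => ⟨pow_ne_zero 2 (hps p p.2).ne_zero⟩
  let residues (a : {a : Fin s → ℤ // (∀ j, |a j| ≤ Pb j) ∧ Squarefree (eval a P)}) (p : ps) :
      {z : Fin s → ZMod ((p : ℕ) ^ 2) //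
        eval z (map (Int.castRingHom (ZMod ((p : ℕ) ^ 2))) P) ≠ 0} :=
    ⟨fun j => (a.1 j : ZMod ((p : ℕ) ^ 2)),
      eval_intCast_ne_zero_of_squarefree P a.2.2 (hps p p.2).ne_one⟩
  have hres : ∀ a b, residues a = residues b →
      ∀ j, a.1 j ≡ b.1 j [ZMOD (∏ p ∈ ps, p ^ 2 : ℕ)] := fun a b hab j =>
    Int.modEq_prod_sq_of_forall hps fun p hp => (ZMod.intCast_eq_intCast_iff _ _ _).mp <|
      congrFun (congrArg Subtype.val (congrFun hab ⟨p, hp⟩)) j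
  refine (card_box_le_card_mul_prod_of_modEq Pb _ residues hres).trans_eq ?_
  rw [Nat.card_pi, Finset.univ_eq_attach]
  congr 1
  rw [← Finset.prod_attach ps]
  exact Finset.prod_congr rfl fun p _ => card_nonroots_eq P _

section EulerProduct

variable {s : ℕ} (P : MvPolynomial (Fin s) ℤ)

theorem cast_pow_sub_rhoP (q : ℕ) [NeZero q] :
    ((q ^ s - rhoP s P q : ℕ) : ℝ) = (q : ℝ) ^ s * (1 - rhoP s P q / (q : ℝ) ^ s) := by
  have hq : (q : ℝ) ^ s ≠ 0 := pow_ne_zero _ (Nat.cast_ne_zero.mpr (NeZero.ne q))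
  rw [Nat.cast_sub (rhoP_le P q), mul_sub, mul_div_cancel₀ _ hq]
  push_cast
  ring

theorem eulerPartialProd_nonneg (N : ℕ) : 0 ≤ eulerPartialProd s P N := by
  refine Finset.prod_nonneg fun p hp => sub_nonneg.mpr <| div_le_one_of_le₀ ?_ (by positivity)
  have : NeZero (p ^ 2) := ⟨pow_ne_zero 2 (Finset.mem_filter.mp hp).2.ne_zero⟩
  rw [pow_mul]
  exact_mod_cast rhoP_le P (p ^ 2)

theorem cast_prod_pow_sub_rhoP_eq (N : ℕ) :
    ((∏ p ∈ (Finset.range (N + 1)).filter Nat.Prime, ((p ^ 2) ^ s - rhoP s P (p ^ 2)) : ℕ) : ℝ) =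
      ((primorial N ^ 2 : ℕ) : ℝ) ^ s * eulerPartialProd s P N := by
  rw [Nat.cast_prod, primorial, ← Finset.prod_pow, Nat.cast_prod, ← Finset.prod_pow,
    eulerPartialProd, ← Finset.prod_mul_distrib]
  refine Finset.prod_congr rfl fun p hp => ?_
  have : NeZero (p ^ 2) := ⟨pow_ne_zero 2 (Finset.mem_filter.mp hp).2.ne_zero⟩
  rw [cast_pow_sub_rhoP, Nat.cast_pow, ← pow_mul]

theorem NP_le_eulerPartialProd_mul_prod (N : ℕ) (Pb : Fin s → ℕ) :
    (NP s P Pb : ℝ) ≤ eulerPartialProd s P N * ∏ j, (2 * (Pb j : ℝ) + primorial N ^ 2) := by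
  set Q := primorial N ^ 2 with hQ
  have hQ0 : (0 : ℝ) < Q := by have := primorial_pos N; positivity
  have hblock : ∀ j, ((2 * Pb j / Q + 1 : ℕ) : ℝ) ≤ (2 * Pb j + Q) / Q := fun j => by
    rw [← Nat.add_div_right _ (by exact_mod_cast hQ0)]
    exact_mod_cast Nat.cast_div_le
  have hsieve := NP_le_prod_mul_prod P (ps := (Finset.range (N + 1)).filter Nat.Prime)
    (fun p hp => (Finset.mem_filter.mp hp).2) Pb
  rw [Finset.prod_pow, ← primorial, ← hQ] at hsieve
  calc (NP s P Pb : ℝ)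
      ≤ (Q : ℝ) ^ s * eulerPartialProd s P N * ∏ j, ((2 * Pb j / Q + 1 : ℕ) : ℝ) := by
        rw [← cast_prod_pow_sub_rhoP_eq, ← Nat.cast_prod, ← Nat.cast_mul]
        exact_mod_cast hsieve
    _ ≤ (Q : ℝ) ^ s * eulerPartialProd s P N * ∏ j, ((2 * Pb j + Q) / Q : ℝ) := by
        have := eulerPartialProd_nonneg P N
        gcongr with j
        exact hblock j
    _ = eulerPartialProd s P N * ∏ j, (2 * (Pb j : ℝ) + Q) := by
        rw [Finset.prod_div_distrib, Finset.prod_const, Finset.card_univ, Fintype.card_fin]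
        field_simp
    _ = _ := by rw [hQ, Nat.cast_pow]

end EulerProduct

theorem two_mul_add_le_two_mul_mul {x Q M : ℝ} (hQ : 0 ≤ Q) (hM : 0 < M) (hx : M ≤ x) :
    2 * x + Q ≤ 2 * x * (1 + Q / 2 / M) := by
  have : Q ≤ x * (Q / M) := by
    rw [mul_div_assoc', le_div_iff₀ hM, mul_comm]
    exact mul_le_mul_of_nonneg_right hx hQ
  linarith [show 2 * x * (1 + Q / 2 / M) = 2 * x + x * (Q / M) by ring]

theorem exists_forall_le_mul_prod_of_lt {E T Q : ℝ} (hE : 0 ≤ E) (hET : E < T) (hQ : 0 ≤ Q)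
    (s : ℕ) : ∃ M : ℕ, ∀ x : Fin s → ℕ, (∀ j, M ≤ x j) →
      E * ∏ j, (2 * (x j : ℝ) + Q) ≤ T * 2 ^ s * ∏ j, (x j : ℝ) := by
  have hlim : Filter.Tendsto (fun M : ℕ => (1 + Q / 2 / M) ^ s * E) Filter.atTop (nhds E) := by
    simpa using (((tendsto_const_div_atTop_nhds_zero_nat (Q / 2)).const_add 1).pow s).mul_const E
  obtain ⟨M, hMT, hM1⟩ :=
    ((hlim.eventually (gt_mem_nhds hET)).and (Filter.eventually_ge_atTop 1)).exists
  have hM0 : (0 : ℝ) < M := by exact_mod_cast hM1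
  refine ⟨M, fun x hx => ?_⟩
  have hxM : ∀ j, (M : ℝ) ≤ x j := fun j => by exact_mod_cast hx j
  calc E * ∏ j, (2 * (x j : ℝ) + Q)
      ≤ E * ∏ j, (2 * (x j : ℝ) * (1 + Q / 2 / M)) := by
        gcongr with j
        exact two_mul_add_le_two_mul_mul hQ hM0 (hxM j)
    _ = (1 + Q / 2 / M) ^ s * E * (2 ^ s * ∏ j, (x j : ℝ)) := by
        rw [Finset.prod_mul_distrib, Finset.prod_mul_distrib, Finset.prod_const,
          Finset.prod_const, Finset.card_univ, Fintype.card_fin]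
        ring
    _ ≤ T * 2 ^ s * ∏ j, (x j : ℝ) := by
        rw [mul_assoc T]
        gcongr

theorem upper_density_le_euler_product_general (s : ℕ)
    (P : MvPolynomial (Fin s) ℤ)
    (S : ℝ) (hS : Filter.Tendsto (eulerPartialProd s P) Filter.atTop (nhds S)) :
    ∀ ε : ℝ, 0 < ε → ∃ M : ℕ, ∀ Pb : Fin s → ℕ, (∀ j, 0 < Pb j) →
      (∀ j, M ≤ Pb j) →
      (NP s P Pb : ℝ) ≤ (S + ε) * 2 ^ s * ∏ j, (Pb j : ℝ) := by
  intro ε hε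
  obtain ⟨N, hN⟩ := (hS.eventually (gt_mem_nhds (lt_add_of_pos_right S hε))).exists
  obtain ⟨M, hM⟩ := exists_forall_le_mul_prod_of_lt (eulerPartialProd_nonneg P N) hN
    (by positivity : (0 : ℝ) ≤ (primorial N : ℝ) ^ 2) s
  exact ⟨M, fun Pb _ hPbM => (NP_le_eulerPartialProd_mul_prod P N Pb).trans (hM Pb hPbM)⟩

/-- If `P ∈ ℤ[X₁,…,X_s]` has total degree `≥ 2`, then the upper density of
squarefree values of `P` is at most the Euler product `𝔖_P` (the limit `S` of the
partial products): for every `ε > 0` there is `M` such that for all tuples `𝐏` of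
positive integers with `min(P₁,…,P_s) ≥ M` one has `N_P(𝐏) ≤ (S + ε) · 2ˢ · P₁⋯P_s`. -/
theorem upper_density_le_euler_product (s : ℕ) (hs : 1 ≤ s)
    (P : MvPolynomial (Fin s) ℤ) (hd : 2 ≤ P.totalDegree)
    (S : ℝ) (hS : Filter.Tendsto (eulerPartialProd s P) Filter.atTop (nhds S)) :
    ∀ ε : ℝ, 0 < ε → ∃ M : ℕ, ∀ Pb : Fin s → ℕ, (∀ j, 0 < Pb j) →
      (∀ j, M ≤ Pb j) →
      (NP s P Pb : ℝ) ≤ (S + ε) * 2 ^ s * ∏ j, (Pb j : ℝ) :=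
  upper_density_le_euler_product_general s P S hS
end

section
/- Let s ≥ 1 and let P ∈ ℤ[X₁,…,X_s] be a polynomial of total degree d ≥ 2. Suppose the upper density of squarefree values of P is positive: there exists a real δ > 0 such that for every M there is a tuple 𝐏 = (P₁,…,P_s) of positive integers with min(P₁,…,P_s) ≥ M and N_P(𝐏) ≥ δ · 2ˢ · P₁⋯P_s. Then: (1) the Euler product 𝔖_P is strictly positive; (2) P is squarefree as a polynomial, i.e., there is no non-constant L ∈ ℤ[X₁,…,X_s] with L² dividing P in ℤ[X₁,…,X_s]; and (3) P does not enjoy property (a), i.e., for every prime p there exists (a₁,…,a_s) ∈ ℤˢ with p² not dividing P(a₁,…,a_s). -/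
open MvPolynomial Finset

lemma Squarefree.not_sq_dvd {R : Type*} [Monoid R] {n p : R} (hn : Squarefree n)
    (hp : ¬ IsUnit p) : ¬ p ^ 2 ∣ n :=
  fun h => hp (hn p (by rwa [sq] at h))

lemma prod_two_mul_add_one_le {ι : Type*} (t : Finset ι) {x : ι → ℝ} (hx : ∀ i ∈ t, 1 ≤ x i) :
    ∏ i ∈ t, (2 * x i + 1) ≤ 3 ^ #t * ∏ i ∈ t, x i := by
  rw [← prod_const, ← prod_mul_distrib]
  exact prod_le_prod (fun i hi => by linarith [hx i hi]) fun i hi => by linarith [hx i hi]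

lemma eval_map_intCast {σ R : Type*} [CommRing R] (a : σ → ℤ) (P : MvPolynomial σ ℤ) :
    eval (fun j => (a j : R)) (map (Int.castRingHom R) P) = eval a P := by
  rw [eval_map]
  exact (eval₂_comp _ a P).symm

lemma eq_of_intCast_eq_of_add_ediv_eq {Q : ℕ} {x y c : ℤ} (h : (x : ZMod Q) = y)
    (h' : (x + c) / Q = (y + c) / Q) : x = y := by
  have hmod : (x + c) % Q = (y + c) % Q := by
    rw [Int.add_emod, (ZMod.intCast_eq_intCast_iff' x y Q).1 h, ← Int.add_emod]
  have hx := Int.mul_ediv_add_emod (x + c) Q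
  rw [h', hmod, Int.mul_ediv_add_emod] at hx
  linarith

open scoped Function in
lemma card_forall_cast_mem_of_coprime {ι κ : Type*} [Fintype ι] {m : ι → ℕ}
    (hm : Pairwise (Nat.Coprime on m)) (D : ∀ i, Set (κ → ZMod (m i))) :
    Nat.card {r : κ → ZMod (∏ i, m i) // ∀ i, (fun k => ((r k).cast : ZMod (m i))) ∈ D i} =
      ∏ i, Nat.card (D i) := by
  let e := ZMod.prodEquivPi m hm
  have E : {r : κ → ZMod (∏ i, m i) // ∀ i, (fun k => ((r k).cast : ZMod (m i))) ∈ D i} ≃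
      ∀ i, D i :=
    (Equiv.subtypeEquiv ((Equiv.piCongrRight fun _ => e.toEquiv).trans (Equiv.piComm _))
      fun r => forall_congr' fun i => by
        have : (fun k => ((r k).cast : ZMod (m i))) = fun k => e (r k) i :=
          funext fun k => by simp [e]
        rw [this]
        rfl).trans Equiv.subtypePiEquivPi
  rw [Nat.card_congr E, Nat.card_pi]

lemma sq_sub_one_ne_zero_of_totalDegree_pos {σ R : Type*} [CommRing R] [IsDomain R]
    {L : MvPolynomial σ R} (hL : 0 < L.totalDegree) : L ^ 2 - 1 ≠ 0 := by
  rw [sub_ne_zero, Ne, sq_eq_one_iff]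
  rintro (rfl | rfl) <;> simp at hL

section

variable {s : ℕ}

lemma card_filter_eval_eq_zero_mul_le {R : Type*} [CommRing R] [IsDomain R] [DecidableEq R]
    {f : MvPolynomial (Fin s) R} (hf : f ≠ 0) (S : Fin s → Finset R) {n : ℕ} (hn : 0 < n)
    (hS : ∀ i, n ≤ #(S i)) :
    #{x ∈ Fintype.piFinset S | eval x f = 0} * n ≤ (∑ i, f.degreeOf i) * ∏ i, #(S i) := by
  have hprod : (0 : ℚ≥0) < ∏ i, (#(S i) : ℚ≥0) :=
    prod_pos fun i _ => by exact_mod_cast hn.trans_le (hS i)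
  have hsum : ∑ i, (f.degreeOf i / #(S i) : ℚ≥0) ≤ (∑ i, f.degreeOf i : ℕ) / n := by
    push_cast
    rw [sum_div]
    gcongr with i
    exact_mod_cast hS i
  have := (div_le_iff₀ hprod).1 ((schwartz_zippel_sum_degreeOf hf S).trans hsum)
  rw [div_mul_eq_mul_div, le_div_iff₀ (by exact_mod_cast hn)] at this
  exact_mod_cast this

def SquarefreeDensityAtLeast (s : ℕ) (P : MvPolynomial (Fin s) ℤ) (δ : ℝ) : Prop :=
  ∀ M : ℕ, ∃ Pb : Fin s → ℕ, (∀ j, 0 < Pb j) ∧ (∀ j, M ≤ Pb j) ∧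
    δ * 2 ^ s * ∏ j, (Pb j : ℝ) ≤ (NP s P Pb : ℝ)

noncomputable def intBox (Pb : Fin s → ℕ) : Finset (Fin s → ℤ) :=
  Fintype.piFinset fun j => Icc (-(Pb j : ℤ)) (Pb j)

lemma mem_intBox {Pb : Fin s → ℕ} {a : Fin s → ℤ} : a ∈ intBox Pb ↔ ∀ j, |a j| ≤ Pb j := by
  simp [intBox, abs_le]

lemma card_Icc_neg_self (c : ℕ) : #(Icc (-(c : ℤ)) c) = 2 * c + 1 := by
  rw [Int.card_Icc]
  omega

open scoped Classical in
lemma NP_eq_card_filter (P : MvPolynomial (Fin s) ℤ) (Pb : Fin s → ℕ) :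
    NP s P Pb = #{a ∈ intBox Pb | Squarefree (eval a P)} := by
  rw [NP, ← Nat.card_eq_finsetCard]
  congr
  ext a
  simp [mem_intBox]

lemma exists_squarefree_eval {P : MvPolynomial (Fin s) ℤ} {δ : ℝ}
    (h : SquarefreeDensityAtLeast s P δ) (hδ : 0 < δ) : ∃ a, Squarefree (eval a P) := by
  obtain ⟨Pb, hpos, -, hNP⟩ := h 0
  have : 0 < NP s P Pb := by
    have : (0 : ℝ) < ∏ j, (Pb j : ℝ) := prod_pos fun j _ => by exact_mod_cast hpos j
    exact_mod_cast (by positivity : (0 : ℝ) < δ * 2 ^ s * ∏ j, (Pb j : ℝ)).trans_le hNP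
  obtain ⟨⟨a, -, ha⟩⟩ := (Nat.card_pos_iff.mp this).1
  exact ⟨a, ha⟩

/-- A residue class modulo `Q` meets an interval of length `2c` in at most `2c / Q + 1` points. -/
lemma card_intBox_filter_intCast_mem_le {Q : ℕ} (hQ : 0 < Q) (Pb : Fin s → ℕ)
    (G : Finset (Fin s → ZMod Q)) :
    #{a ∈ intBox Pb | (fun j => (a j : ZMod Q)) ∈ G} ≤ #G * ∏ j, (2 * Pb j / Q + 1) := by
  classical
  let T : Finset (Fin s → ℤ) := Fintype.piFinset fun j => Icc 0 ((2 * Pb j / Q : ℕ) : ℤ)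
  have hT : #T = ∏ j, (2 * Pb j / Q + 1) := by
    rw [Fintype.card_piFinset]
    refine prod_congr rfl fun j _ => ?_
    rw [Int.card_Icc, sub_zero, Int.toNat_natCast_add_one]
  calc #{a ∈ intBox Pb | (fun j => (a j : ZMod Q)) ∈ G}
      ≤ #(G ×ˢ T) := by
        refine card_le_card_of_injOn (fun a => (fun j => (a j : ZMod Q), fun j => (a j + Pb j) / Q))
          (fun a ha => ?_) fun a _ b _ hab => funext fun j => ?_
        · simp only [coe_filter, Set.mem_ofPred_eq, mem_intBox, abs_le] at ha
          simp only [coe_product, Set.mem_prod, mem_coe, T, Fintype.mem_piFinset, mem_Icc]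
          refine ⟨ha.2, fun j => ⟨Int.ediv_nonneg (by linarith [ha.1 j]) (by positivity), ?_⟩⟩
          push_cast
          exact Int.ediv_le_ediv (by exact_mod_cast hQ) (by linarith [ha.1 j])
        · exact eq_of_intCast_eq_of_add_ediv_eq (congrFun (congrArg Prod.fst hab) j)
            (congrFun (congrArg Prod.snd hab) j)
    _ = #G * ∏ j, (2 * Pb j / Q + 1) := by rw [card_product, hT]

def squarefreeResidues (P : MvPolynomial (Fin s) ℤ) (F : Finset ℕ) :
    Set (Fin s → ZMod (∏ p : F, (p : ℕ) ^ 2)) :=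
  {r | ∀ p : F, eval (fun j => ((r j).cast : ZMod ((p : ℕ) ^ 2)))
    (map (Int.castRingHom (ZMod ((p : ℕ) ^ 2))) P) ≠ 0}

lemma eval_map_intCast_ne_zero_of_squarefree {P : MvPolynomial (Fin s) ℤ} {a : Fin s → ℤ}
    (ha : Squarefree (eval a P)) {p : ℕ} (hp : p.Prime) :
    eval (fun j => (a j : ZMod (p ^ 2))) (map (Int.castRingHom (ZMod (p ^ 2))) P) ≠ 0 := by
  rw [eval_map_intCast, Ne, ZMod.intCast_zmod_eq_zero_iff_dvd, Nat.cast_pow]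
  exact ha.not_sq_dvd (Nat.prime_iff_prime_int.mp hp).not_isUnit

lemma intCast_mem_squarefreeResidues {P : MvPolynomial (Fin s) ℤ} {a : Fin s → ℤ}
    (ha : Squarefree (eval a P)) {F : Finset ℕ} (hF : ∀ p ∈ F, p.Prime) :
    (fun j => (a j : ZMod (∏ p : F, (p : ℕ) ^ 2))) ∈ squarefreeResidues P F := fun p => by
  simp_rw [ZMod.cast_intCast (dvd_prod_of_mem (fun p : F => (p : ℕ) ^ 2) (mem_univ p))]
  exact eval_map_intCast_ne_zero_of_squarefree ha (hF p p.2)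

lemma card_eval_map_ne_zero (P : MvPolynomial (Fin s) ℤ) (m : ℕ) [NeZero m] :
    (Nat.card {v : Fin s → ZMod m // eval v (map (Int.castRingHom (ZMod m)) P) ≠ 0} : ℝ) =
      (m : ℝ) ^ s - rhoP s P m := by
  classical
  rw [rhoP, Nat.card_eq_fintype_card, Nat.card_eq_fintype_card, Fintype.card_subtype_compl,
    Nat.cast_sub (Fintype.card_subtype_le _)]
  simp [ZMod.card]

lemma card_squarefreeResidues (P : MvPolynomial (Fin s) ℤ) {F : Finset ℕ}
    (hF : ∀ p ∈ F, p.Prime) :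
    (Nat.card (squarefreeResidues P F) : ℝ) =
      ∏ p : F, (((p : ℝ) ^ 2) ^ s - rhoP s P ((p : ℕ) ^ 2)) := by
  have hcop : Pairwise (Function.onFun Nat.Coprime fun p : F => (p : ℕ) ^ 2) :=
    fun p q hpq => Nat.Coprime.pow 2 2 <|
      (Nat.coprime_primes (hF p p.2) (hF q q.2)).2 fun h => hpq (Subtype.ext h)
  have h := card_forall_cast_mem_of_coprime hcop fun p : F =>
    {v : Fin s → ZMod ((p : ℕ) ^ 2) | eval v (map (Int.castRingHom _) P) ≠ 0}
  rw [show Nat.card (squarefreeResidues P F) = _ from h, Nat.cast_prod]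
  refine prod_congr rfl fun p _ => ?_
  have : NeZero ((p : ℕ) ^ 2) := ⟨pow_ne_zero 2 (hF p p.2).ne_zero⟩
  exact (card_eval_map_ne_zero P _).trans (by push_cast; rfl)

lemma prod_one_sub_rhoP_div_eq (P : MvPolynomial (Fin s) ℤ) {F : Finset ℕ} (hF : ∀ p ∈ F, p.Prime) :
    ∏ p ∈ F, (1 - (rhoP s P (p ^ 2) : ℝ) / (p : ℝ) ^ (2 * s)) =
      Nat.card (squarefreeResidues P F) / ((∏ p : F, (p : ℕ) ^ 2 : ℕ) : ℝ) ^ s := by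
  rw [card_squarefreeResidues P hF, Nat.cast_prod, ← prod_pow, ← prod_div_distrib,
    ← prod_coe_sort F]
  refine prod_congr rfl fun p _ => ?_
  have : (p : ℝ) ^ (2 * s) ≠ 0 := pow_ne_zero _ (Nat.cast_ne_zero.2 (hF p p.2).ne_zero)
  push_cast
  rw [← pow_mul]
  field_simp

lemma le_prod_one_sub_rhoP_div {P : MvPolynomial (Fin s) ℤ} {δ : ℝ}
    (h : SquarefreeDensityAtLeast s P δ) {F : Finset ℕ} (hF : ∀ p ∈ F, p.Prime) :
    δ * 2 ^ s / 3 ^ s ≤ ∏ p ∈ F, (1 - (rhoP s P (p ^ 2) : ℝ) / (p : ℝ) ^ (2 * s)) := by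
  classical
  set Q := ∏ p : F, (p : ℕ) ^ 2
  have hQ : 0 < Q := prod_pos fun p _ => pow_pos (hF p p.2).pos 2
  have : NeZero Q := ⟨hQ.ne'⟩
  have hQR : (0 : ℝ) < Q := by exact_mod_cast hQ
  obtain ⟨Pb, hpos, hQle, hNP⟩ := h Q
  set G := (squarefreeResidues P F).toFinset
  have hcount : NP s P Pb ≤ #G * ∏ j, (2 * Pb j / Q + 1) := by
    rw [NP_eq_card_filter]
    refine (card_le_card (monotone_filter_right _ fun a _ ha => ?_)).trans
      (card_intBox_filter_intCast_mem_le hQ Pb G)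
    exact Set.mem_toFinset.2 (intCast_mem_squarefreeResidues ha hF)
  have hbox : ∏ j, ((2 * Pb j / Q + 1 : ℕ) : ℝ) ≤ 3 ^ s * (∏ j, (Pb j : ℝ)) / (Q : ℝ) ^ s :=
    calc ∏ j, ((2 * Pb j / Q + 1 : ℕ) : ℝ)
        ≤ ∏ j, (2 * ((Pb j : ℝ) / Q) + 1) := prod_le_prod (fun j _ => by positivity) fun j _ => by
          push_cast
          grw [Nat.cast_div_le]
          push_cast
          rw [mul_div_assoc]
      _ ≤ 3 ^ s * ∏ j, ((Pb j : ℝ) / Q) := by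
          simpa using prod_two_mul_add_one_le univ (x := fun j => (Pb j : ℝ) / Q) fun j _ =>
            (one_le_div hQR).2 (by exact_mod_cast hQle j)
      _ = 3 ^ s * (∏ j, (Pb j : ℝ)) / (Q : ℝ) ^ s := by
          rw [prod_div_distrib, prod_const, card_univ, Fintype.card_fin, mul_div_assoc]
  have hPb : (0 : ℝ) < ∏ j, (Pb j : ℝ) := prod_pos fun j _ => by exact_mod_cast hpos j
  rw [prod_one_sub_rhoP_div_eq P hF, Nat.card_eq_card_toFinset, div_le_div_iff₀ (by positivity)
    (by positivity)]
  refine le_of_mul_le_mul_right ?_ hPb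
  calc δ * 2 ^ s * (Q : ℝ) ^ s * ∏ j, (Pb j : ℝ)
      ≤ NP s P Pb * (Q : ℝ) ^ s := by nlinarith [pow_pos hQR s]
    _ ≤ #G * (∏ j, ((2 * Pb j / Q + 1 : ℕ) : ℝ)) * (Q : ℝ) ^ s := by gcongr; exact_mod_cast hcount
    _ ≤ #G * (3 ^ s * (∏ j, (Pb j : ℝ)) / (Q : ℝ) ^ s) * (Q : ℝ) ^ s := by gcongr
    _ = #G * 3 ^ s * ∏ j, (Pb j : ℝ) := by field_simp

lemma isUnit_eval_of_sq_dvd_of_squarefree {P L : MvPolynomial (Fin s) ℤ} (hLP : L ^ 2 ∣ P)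
    {a : Fin s → ℤ} (ha : Squarefree (eval a P)) : IsUnit (eval a L) :=
  ha _ (by simpa [sq] using map_dvd (eval a) hLP)

lemma NP_le_card_eval_sq_sub_one_eq_zero {P L : MvPolynomial (Fin s) ℤ} (hLP : L ^ 2 ∣ P)
    (Pb : Fin s → ℕ) : NP s P Pb ≤ #{a ∈ intBox Pb | eval a (L ^ 2 - 1) = 0} := by
  classical
  rw [NP_eq_card_filter]
  refine card_le_card (monotone_filter_right _ fun a _ ha => ?_)
  rw [map_sub, map_pow, map_one, sq,
    Int.isUnit_mul_self (isUnit_eval_of_sq_dvd_of_squarefree hLP ha), sub_self]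

lemma not_sq_dvd_of_squarefreeDensityAtLeast {P : MvPolynomial (Fin s) ℤ} {δ : ℝ}
    (h : SquarefreeDensityAtLeast s P δ) (hδ : 0 < δ) {L : MvPolynomial (Fin s) ℤ}
    (hL : 1 ≤ L.totalDegree) : ¬ L ^ 2 ∣ P := by
  intro hLP
  set D := ∑ i, (L ^ 2 - 1).degreeOf i
  obtain ⟨M, hM⟩ := exists_nat_gt (D * 3 ^ s / (δ * 2 ^ s))
  obtain ⟨Pb, hpos, hMle, hNP⟩ := h M
  have hcount : NP s P Pb * (2 * M + 1) ≤ D * ∏ j, (2 * Pb j + 1) :=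
    calc NP s P Pb * (2 * M + 1)
        ≤ #{a ∈ intBox Pb | eval a (L ^ 2 - 1) = 0} * (2 * M + 1) :=
          Nat.mul_le_mul_right _ (NP_le_card_eval_sq_sub_one_eq_zero hLP Pb)
      _ ≤ D * ∏ j, #(Icc (-(Pb j : ℤ)) (Pb j)) :=
          card_filter_eval_eq_zero_mul_le (sq_sub_one_ne_zero_of_totalDegree_pos hL) _ (by omega)
            fun j => by rw [card_Icc_neg_self]; have := hMle j; omega
      _ = D * ∏ j, (2 * Pb j + 1) := by simp only [card_Icc_neg_self]
  have hbox : ∏ j, (2 * (Pb j : ℝ) + 1) ≤ 3 ^ s * ∏ j, (Pb j : ℝ) := by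
    simpa using prod_two_mul_add_one_le univ fun j _ => Nat.one_le_cast.mpr (hpos j)
  have hPb : (0 : ℝ) < ∏ j, (Pb j : ℝ) := prod_pos fun j _ => by exact_mod_cast hpos j
  have hineq : δ * 2 ^ s * (2 * M + 1) * ∏ j, (Pb j : ℝ) ≤ D * 3 ^ s * ∏ j, (Pb j : ℝ) :=
    calc δ * 2 ^ s * (2 * M + 1) * ∏ j, (Pb j : ℝ)
        ≤ NP s P Pb * (2 * M + 1) := by nlinarith
      _ ≤ D * ∏ j, (2 * (Pb j : ℝ) + 1) := by exact_mod_cast hcount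
      _ ≤ D * 3 ^ s * ∏ j, (Pb j : ℝ) := by rw [mul_assoc]; gcongr
  rw [div_lt_iff₀ (by positivity)] at hM
  have hc : 0 < δ * 2 ^ s := by positivity
  nlinarith [le_of_mul_le_mul_right hineq hPb, mul_nonneg (Nat.cast_nonneg M : (0 : ℝ) ≤ M) hc.le]

end

theorem squarefree_of_positive_upper_density_general (s : ℕ)
    (P : MvPolynomial (Fin s) ℤ)
    (δ : ℝ) (hδ : 0 < δ)
    (hdens : ∀ M : ℕ, ∃ Pb : Fin s → ℕ, (∀ j, 0 < Pb j) ∧ (∀ j, M ≤ Pb j) ∧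
      δ * 2 ^ s * ∏ j, (Pb j : ℝ) ≤ (NP s P Pb : ℝ))
    (S : ℝ) (hS : Filter.Tendsto (eulerPartialProd s P) Filter.atTop (nhds S)) :
    0 < S ∧
      (¬ ∃ L : MvPolynomial (Fin s) ℤ, 1 ≤ L.totalDegree ∧ L ^ 2 ∣ P) ∧
      (∀ p : ℕ, p.Prime → ∃ a : Fin s → ℤ, ¬ ((p : ℤ)) ^ 2 ∣ MvPolynomial.eval a P) := by
  refine ⟨?_, fun ⟨L, hL, hLP⟩ => not_sq_dvd_of_squarefreeDensityAtLeast hdens hδ hL hLP,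
    fun p hp => ?_⟩
  · have hlower : δ * 2 ^ s / 3 ^ s ≤ S :=
      ge_of_tendsto' hS fun N => le_prod_one_sub_rhoP_div hdens fun p hp => (mem_filter.1 hp).2
    exact (by positivity : (0 : ℝ) < δ * 2 ^ s / 3 ^ s).trans_le hlower
  · obtain ⟨a, ha⟩ := exists_squarefree_eval hdens hδ
    exact ⟨a, ha.not_sq_dvd (Nat.prime_iff_prime_int.mp hp).not_isUnit⟩

/-- If `P ∈ ℤ[X₁,…,X_s]` has total degree `≥ 2` and the upper density of
squarefree values of `P` is positive (there is a real `δ > 0` such that for every `M`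
there is a tuple `𝐏` of positive integers with `min(P₁,…,P_s) ≥ M` and
`N_P(𝐏) ≥ δ · 2ˢ · P₁⋯P_s`), then: (1) the Euler product `𝔖_P` (the limit `S` of the
partial products) is strictly positive; (2) `P` is squarefree as a polynomial; and
(3) `P` does not enjoy property (a). -/
theorem squarefree_of_positive_upper_density (s : ℕ) (hs : 1 ≤ s)
    (P : MvPolynomial (Fin s) ℤ) (hd : 2 ≤ P.totalDegree)
    (δ : ℝ) (hδ : 0 < δ)
    (hdens : ∀ M : ℕ, ∃ Pb : Fin s → ℕ, (∀ j, 0 < Pb j) ∧ (∀ j, M ≤ Pb j) ∧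
      δ * 2 ^ s * ∏ j, (Pb j : ℝ) ≤ (NP s P Pb : ℝ))
    (S : ℝ) (hS : Filter.Tendsto (eulerPartialProd s P) Filter.atTop (nhds S)) :
    0 < S ∧
      (¬ ∃ L : MvPolynomial (Fin s) ℤ, 1 ≤ L.totalDegree ∧ L ^ 2 ∣ P) ∧
      (∀ p : ℕ, p.Prime → ∃ a : Fin s → ℤ, ¬ ((p : ℤ)) ^ 2 ∣ MvPolynomial.eval a P) :=
  squarefree_of_positive_upper_density_general s P δ hδ hdens S hS
end
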